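/- For positive integers α, β and all n ≥ 1: Σ_{k=0}^{n} E_{n,k}(α,β,q) = ∏_{i=0}^{n-1} [α+β+i], where E_{n,k} is defined by E_{0,0}=1, E_{n,k} = q^(β+k-1)[n-k+α]E_{n-1,k-1} + [k+β]E_{n-1,k}, and E_{n,k}=0 outside 0 ≤ k ≤ n. -/

import Mathlib

open Finset

noncomputable section

abbrev K : Type := RatFunc ℚ

def qq : K := RatFunc.X

def qint (m : ℕ) : K := ∑ i ∈ Finset.range m, qq ^ i

def qfact (m : ℕ) : K := ∏ i ∈ Finset.range m, qint (i + 1)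

def qbinom (a b : ℕ) : K := qfact a / (qfact b * qfact (a - b))

def E (α β : ℕ) : ℕ → ℕ → K
  | 0, k => if k = 0 then 1 else 0
  | n + 1, 0 => qint β * E α β n 0
  | n + 1, k + 1 =>
      qq ^ (β + k) * qint (n - k + α) * E α β n k + qint (k + 1 + β) * E α β n (k + 1)

def poch (N : ℕ) : PowerSeries K :=
  ∏ i ∈ Finset.range N, (1 - PowerSeries.C (qq ^ i) * PowerSeries.X)

/-! Regrouping row `n + 1` by the entry of row `n` it comes from, `E n k` appears with total weight
`[k + β] + q^(β + k) [n - k + α] = [α + β + n]`, so each row sum is the previous one times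
`[α + β + n]`. -/

lemma qint_add (a b : ℕ) : qint (a + b) = qint a + qq ^ a * qint b := by
  simp only [qint, sum_range_add, mul_sum, pow_add]

lemma qint_add_qq_pow_mul_qint {α β n k : ℕ} (hk : k ≤ n) :
    qint (k + β) + qq ^ (β + k) * qint (n - k + α) = qint (α + β + n) := by
  rw [add_comm β k, ← qint_add]
  congr 1
  omega

lemma E_eq_zero_of_lt {α β n k : ℕ} (h : n < k) : E α β n k = 0 := by
  induction n generalizing k with
  | zero => simp [E, Nat.pos_iff_ne_zero.mp h]
  | succ n ih =>
    obtain ⟨k, rfl⟩ := Nat.exists_eq_add_one_of_ne_zero (by omega : k ≠ 0)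
    simp only [E, ih (by omega : n < k), ih (by omega : n < k + 1), mul_zero, add_zero]

lemma sum_E_succ_eq_sum_mul_E (α β n : ℕ) :
    ∑ k ∈ range (n + 2), E α β (n + 1) k =
      ∑ k ∈ range (n + 1), (qint (k + β) + qq ^ (β + k) * qint (n - k + α)) * E α β n k := by
  have hlast : E α β n (n + 1) = 0 := E_eq_zero_of_lt (Nat.lt_succ_self n)
  have hdiag : ∑ k ∈ range (n + 1), qint (k + 1 + β) * E α β n (k + 1) + qint β * E α β n 0 =
      ∑ k ∈ range (n + 1), qint (k + β) * E α β n k := by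
    rw [sum_range_succ, hlast, mul_zero, add_zero, sum_range_succ' _ n, zero_add]
  rw [sum_range_succ']
  simp only [E]
  rw [sum_add_distrib, add_assoc, hdiag, ← sum_add_distrib]
  exact sum_congr rfl fun k _ => by ring

lemma sum_E_succ (α β n : ℕ) :
    ∑ k ∈ range (n + 2), E α β (n + 1) k = qint (α + β + n) * ∑ k ∈ range (n + 1), E α β n k := by
  rw [sum_E_succ_eq_sum_mul_E, mul_sum]
  refine sum_congr rfl fun k hk => ?_
  rw [qint_add_qq_pow_mul_qint (Nat.lt_succ_iff.mp (mem_range.mp hk))]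

theorem E_row_sum_general (α β : ℕ) (n : ℕ) :
    ∑ k ∈ Finset.range (n + 1), E α β n k = ∏ i ∈ Finset.range n, qint (α + β + i) := by
  induction n with
  | zero => simp [E]
  | succ n ih => rw [sum_E_succ, ih, prod_range_succ, mul_comm]

theorem E_row_sum (α β : ℕ) (hα : 1 ≤ α) (hβ : 1 ≤ β) (n : ℕ) (hn : 1 ≤ n) :
    ∑ k ∈ Finset.range (n + 1), E α β n k = ∏ i ∈ Finset.range n, qint (α + β + i) :=
  E_row_sum_general α β n

end
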